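/- Consider a three-state Markov chain on {G, B, M} with stationary distribution satisfying the balance relations derived from P(M|G) = (1/2)·ε/(ε+λ), P(B|G) = (1/2)·λ/(ε+λ), P(M|B) = (1/2)·ε/(ε+λ), P(B|B) = (1/2)·λ/(ε+λ), P(M|M) = 1 - p, P(B|M) = 0, with ε, λ > 0 and 0 < p ≤ 1. Then the stationary probabilities are η_M = 1/(1 + 2λp/ε + 2p) and η_G = (λp/ε + 2p)/(1 + 2λp/ε + 2p). -/
import Mathlib


/-- The three-state chain on `{G, B, M}` (states `0 = G`, `1 = B`, `2 = M`) with
`P(M|G) = P(M|B) = (1/2)·ε/(ε+λ)`, `P(B|G) = P(B|B) = (1/2)·λ/(ε+λ)`,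
`P(G|G) = P(G|B) = 1/2`, `P(G|M) = p`, `P(M|M) = 1 - p`, `P(B|M) = 0`
has stationary probabilities `η_M = 1/(1 + 2λp/ε + 2p)` and
`η_G = (λp/ε + 2p)/(1 + 2λp/ε + 2p)`. -/
theorem island_three_state_stationary (ε lam p : ℝ)
    (hε : 0 < ε) (hlam : 0 < lam) (hp0 : 0 < p) (hp1 : p ≤ 1)
    (P : Fin 3 → Fin 3 → ℝ)
    (hP : P = ![![1 / 2, (1 / 2) * (lam / (ε + lam)), (1 / 2) * (ε / (ε + lam))],
                 ![1 / 2, (1 / 2) * (lam / (ε + lam)), (1 / 2) * (ε / (ε + lam))],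
                 ![p, 0, 1 - p]])
    (η : Fin 3 → ℝ)
    (hη0 : ∀ i, 0 ≤ η i) (hη1 : ∑ i, η i = 1)
    (hstat : ∀ j, ∑ i, η i * P i j = η j) :
    η 2 = 1 / (1 + 2 * lam * p / ε + 2 * p) ∧
    η 0 = (lam * p / ε + 2 * p) / (1 + 2 * lam * p / ε + 2 * p) := by
  subst hP
  have h1 := hstat 1
  have h2 := hstat 2
  simp [Fin.sum_univ_three] at h1 h2 hη1
  field_simp at h1 h2
  have hD : 1 + 2 * lam * p / ε + 2 * p ≠ 0 := by positivity
  have key : η 2 * (ε + 2 * p * ε + 2 * lam * p) = ε := by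
    linear_combination -(1:ℝ) * h2 + ε * hη1
  have key2mul : 2 * (ε + lam) * (η 0 * (ε + 2 * p * ε + 2 * lam * p))
      = 2 * (ε + lam) * (p * (2 * ε + lam)) := by
    linear_combination (ε + 2 * p * ε + 2 * lam * p) * h1 + (2 * ε + lam) * h2
      + ((ε + 2 * p * ε + 2 * lam * p) * (2 * ε + lam) - ε * (2 * ε + lam)) * hη1
  have key2 : η 0 * (ε + 2 * p * ε + 2 * lam * p) = p * (2 * ε + lam) :=
    mul_left_cancel₀ (by positivity) key2mul
  have hD2 : (0:ℝ) < ε + 2 * p * ε + 2 * lam * p := by positivity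
  have r1 : 1 / (1 + 2 * lam * p / ε + 2 * p) = ε / (ε + 2 * p * ε + 2 * lam * p) := by
    rw [div_eq_div_iff hD hD2.ne']
    field_simp
    ring
  have r2 : (lam * p / ε + 2 * p) / (1 + 2 * lam * p / ε + 2 * p)
      = p * (2 * ε + lam) / (ε + 2 * p * ε + 2 * lam * p) := by
    rw [div_eq_div_iff hD hD2.ne']
    field_simp
    ring
  constructor
  · rw [r1, eq_div_iff hD2.ne']
    linear_combination key
  · rw [r2, eq_div_iff hD2.ne']
    linear_combination key2
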